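/- Let M be an s×s matrix over 𝔽₂. For each row i let x_i be the number of ones in row i, and for rows i < j let z_{i,j} = |{k : M(i,k) = M(j,k) = 1}|. Then N₂(M) = Σ_{1 ≤ i < j ≤ s} (x_i·x_j − z_{i,j}²). -/

import Mathlib

open scoped Classical

noncomputable section

/-- The 2×2 submatrix of `M` on rows `i, j` and columns `k, l`. -/
def sub2 {s : ℕ} (M : Matrix (Fin s) (Fin s) (ZMod 2)) (i j k l : Fin s) :
    Matrix (Fin 2) (Fin 2) (ZMod 2) := !![M i k, M i l; M j k, M j l]

/-- `N2 M` is the number of invertible 2×2 submatrices of `M`, i.e. the number of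
quadruples `(i, j, k, l)` with `i < j`, `k < l` such that the 2×2 submatrix of `M`
on rows `i, j` and columns `k, l` is invertible over `𝔽₂`. -/
def N2 {s : ℕ} (M : Matrix (Fin s) (Fin s) (ZMod 2)) : ℕ :=
  (Finset.univ.filter (fun q : Fin s × Fin s × Fin s × Fin s =>
    q.1 < q.2.1 ∧ q.2.2.1 < q.2.2.2 ∧ IsUnit (sub2 M q.1 q.2.1 q.2.2.1 q.2.2.2))).card


/-!
Fix rows `i < j` and write `a, b` for their `0/1` indicator vectors. The submatrix on columns
`k, l` is invertible over `𝔽₂` iff exactly one of `a k * b l` and `a l * b k` is `1`, which has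
indicator `a k b l + a l b k - 2 (a k b k)(a l b l)`. Summed over all ordered pairs `(k, l)` this
gives `2 (x i x j - z i j ^ 2)`; the summand is symmetric in `k, l` and vanishes for `k = l`, so
the pairs `k < l` contribute exactly half.
-/

open Finset

namespace ZMod

theorem natCast_val_two_eq_ite (a : ZMod 2) : (a.val : ℤ) = if a = 1 then 1 else 0 := by
  revert a; decide

/-- The product `a d · b c` is regrouped as `a c · b d`, which sums over columns to `z ^ 2`. -/
theorem ite_mul_ne_mul_two (a b c d : ZMod 2) :
    (if a * d ≠ b * c then 1 else 0 : ℤ) =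
      a.val * d.val + b.val * c.val - 2 * (a.val * c.val) * (b.val * d.val) := by
  revert a b c d; decide

end ZMod

section Counting

variable {ι : Type*} [Fintype ι]

theorem natCast_card_filter_eq_one (u : ι → ZMod 2) :
    (#{k | u k = 1} : ℤ) = ∑ k, ((u k).val : ℤ) := by
  rw [card_filter]
  push_cast
  exact sum_congr rfl fun k _ => (ZMod.natCast_val_two_eq_ite (u k)).symm

theorem natCast_card_filter_eq_one_and_eq_one (u v : ι → ZMod 2) :
    (#{k | u k = 1 ∧ v k = 1} : ℤ) = ∑ k, ((u k).val * (v k).val : ℤ) := by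
  rw [card_filter]
  push_cast
  refine sum_congr rfl fun k _ => ?_
  rw [ZMod.natCast_val_two_eq_ite, ZMod.natCast_val_two_eq_ite, ite_zero_mul_ite_zero, one_mul]

theorem two_nsmul_sum_sum_ite_lt [LinearOrder ι] {M : Type*} [AddCommMonoid M] (f : ι → ι → M)
    (hsymm : ∀ k l, f k l = f l k) (hdiag : ∀ k, f k k = 0) :
    2 • ∑ k, ∑ l, (if k < l then f k l else 0) = ∑ k, ∑ l, f k l := by
  have split : ∀ k l, f k l = (if k < l then f k l else 0) + (if l < k then f l k else 0) := by
    intro k l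
    rcases lt_trichotomy k l with h | rfl | h
    · simp [h, h.not_gt]
    · simp [hdiag]
    · simp [h, h.not_gt]
      exact hsymm k l
  calc 2 • ∑ k, ∑ l, (if k < l then f k l else 0)
      = ∑ k, ∑ l, (if k < l then f k l else 0) + ∑ k, ∑ l, (if l < k then f l k else 0) := by
        rw [two_nsmul, sum_comm (f := fun k l => if l < k then f l k else 0)]
    _ = ∑ k, ∑ l, f k l := by simp only [← sum_add_distrib, ← split]

theorem natCast_card_lt_mul_ne_mul [LinearOrder ι] (u v : ι → ZMod 2) :
    (#{p : ι × ι | p.1 < p.2 ∧ u p.1 * v p.2 ≠ u p.2 * v p.1} : ℤ) =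
      (∑ k, ((u k).val : ℤ)) * ∑ k, ((v k).val : ℤ) - (∑ k, ((u k).val * (v k).val : ℤ)) ^ 2 := by
  apply mul_left_cancel₀ (two_ne_zero (α := ℤ))
  rw [card_filter, Fintype.sum_prod_type]
  push_cast
  simp only [ite_and]
  rw [two_mul, ← two_nsmul, two_nsmul_sum_sum_ite_lt]
  · simp only [ZMod.ite_mul_ne_mul_two, sum_sub_distrib, sum_add_distrib, ← mul_sum, ← sum_mul]
    ring
  · intro k l
    simp only [ne_comm]
  · simp

end Counting

theorem isUnit_sub2_iff {s : ℕ} (M : Matrix (Fin s) (Fin s) (ZMod 2)) (i j k l : Fin s) :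
    IsUnit (sub2 M i j k l) ↔ M i k * M j l ≠ M i l * M j k := by
  rw [sub2, Matrix.isUnit_iff_isUnit_det, Matrix.det_fin_two_of, isUnit_iff_ne_zero, sub_ne_zero]

theorem N2_eq_sum_card {s : ℕ} (M : Matrix (Fin s) (Fin s) (ZMod 2)) :
    N2 M = ∑ q : Fin s × Fin s with q.1 < q.2,
      #{p : Fin s × Fin s | p.1 < p.2 ∧ IsUnit (sub2 M q.1 q.2 p.1 p.2)} := by
  simp only [N2, card_filter, Fintype.sum_prod_type, sum_filter, ite_and, sum_ite_irrel,
    sum_const_zero]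

theorem N2_eq_sum (s : ℕ) (M : Matrix (Fin s) (Fin s) (ZMod 2))
    (x : Fin s → ℕ) (hx : ∀ i, x i = (Finset.univ.filter (fun k : Fin s => M i k = 1)).card)
    (z : Fin s → Fin s → ℕ)
    (hz : ∀ i j, z i j = (Finset.univ.filter (fun k : Fin s => M i k = 1 ∧ M j k = 1)).card) :
    (N2 M : ℤ) =
      ∑ q ∈ Finset.univ.filter (fun q : Fin s × Fin s => q.1 < q.2),
        ((x q.1 : ℤ) * (x q.2 : ℤ) - (z q.1 q.2 : ℤ) ^ 2) := by
  have hx_sum : ∀ i, (x i : ℤ) = ∑ k, ((M i k).val : ℤ) := fun i => by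
    rw [hx, natCast_card_filter_eq_one]
  have hz_sum : ∀ i j, (z i j : ℤ) = ∑ k, ((M i k).val * (M j k).val : ℤ) := fun i j => by
    rw [hz, natCast_card_filter_eq_one_and_eq_one]
  rw [N2_eq_sum_card]
  push_cast
  refine sum_congr rfl fun q _ => ?_
  simp only [isUnit_sub2_iff, natCast_card_lt_mul_ne_mul, hx_sum, hz_sum]
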